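/- arXiv:1912.02858 — 8 statements merged into one kernel-verified Lean document; each statement's English description precedes it below -/
import Mathlib

section
/- mixValue is monotone: if L₁ ⊆ L₂, R₁ ⊆ R₂, with L₂ and R₂ disjoint finite sets of reals, then mixValue(L₁,R₁) ≤ mixValue(L₂,R₂). -/
/-- Number of maximal blocks of equal symbols in a string over `{L,R}` (as `Bool`s). -/
def blocks : List Bool → ℕ
  | [] => 0
  | [_] => 1
  | a :: b :: l => (if a = b then 0 else 1) + blocks (b :: l)

/-- The labeled merge of two finite sets of reals: sort `L ∪ R` increasingly and
label each element by whether it came from `L` (`true`) or not. -/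
noncomputable def mix (L R : Finset ℝ) : List Bool :=
  ((L ∪ R).sort (· ≤ ·)).map (fun x => decide (x ∈ L))

/-- `mixValue L R` is the number of maximal same-origin blocks in the merged sorted sequence. -/
noncomputable def mixValue (L R : Finset ℝ) : ℕ := blocks (mix L R)

/-! Deleting a symbol from a string never increases its number of blocks, so `blocks` is monotone
along sublists. Enlarging `L` and `R` (keeping them disjoint) only inserts labelled points into the
merged sequence without relabelling the old ones, so `mix L₁ R₁` is a sublist of `mix L₂ R₂`. -/

theorem Finset.sort_sublist_sort_of_subset {α : Type*} (r : α → α → Prop) [DecidableRel r]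
    [IsTrans α r] [Std.Antisymm r] [Std.Total r] {s t : Finset α} (h : s ⊆ t) :
    (s.sort r).Sublist (t.sort r) :=
  List.sublist_of_subperm_of_pairwise
    ((s.sort_nodup r).subperm fun x hx => by simpa using h (by simpa using hx))
    (s.pairwise_sort r) (t.pairwise_sort r)

lemma blocks_le_blocks_cons (a : Bool) (l : List Bool) : blocks l ≤ blocks (a :: l) := by
  cases l with
  | nil => simp [blocks]
  | cons b l => simp only [blocks]; omega

/-- Between two symbols `a` and `c`, an inserted `b` differs from one of them whenever `a ≠ c`. -/
lemma blocks_cons_le_blocks_cons_cons (a b : Bool) (l : List Bool) :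
    blocks (a :: l) ≤ blocks (a :: b :: l) := by
  cases l with
  | nil => simp only [blocks]; split <;> simp
  | cons c l => simp only [blocks]; grind

lemma blocks_cons_le_of_sublist {s t : List Bool} (h : s.Sublist t) (a : Bool) :
    blocks (a :: s) ≤ blocks (a :: t) := by
  induction h generalizing a with
  | slnil => rfl
  | cons b _ ih => exact (ih a).trans (blocks_cons_le_blocks_cons_cons a b _)
  | cons_cons b _ ih => simp only [blocks]; exact Nat.add_le_add_left (ih b) _

lemma blocks_le_of_sublist {s t : List Bool} (h : s.Sublist t) : blocks s ≤ blocks t := by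
  induction h with
  | slnil => rfl
  | cons b _ ih => exact ih.trans (blocks_le_blocks_cons b _)
  | cons_cons b h _ => exact blocks_cons_le_of_sublist h b

lemma mix_eq_map_mem_of_subset {L₁ L₂ R : Finset ℝ} (hL : L₁ ⊆ L₂) (h : Disjoint L₂ R) :
    mix L₁ R = ((L₁ ∪ R).sort (· ≤ ·)).map (fun x => decide (x ∈ L₂)) := by
  refine List.map_congr_left fun x hx => ?_
  rcases Finset.mem_union.mp ((Finset.mem_sort _).mp hx) with hx | hx
  · simp [hx, hL hx]
  · have hx₂ : x ∉ L₂ := Finset.disjoint_right.mp h hx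
    simp [hx₂, show x ∉ L₁ from fun hx₁ => hx₂ (hL hx₁)]

lemma mix_sublist_mix {L₁ L₂ R₁ R₂ : Finset ℝ} (hL : L₁ ⊆ L₂) (hR : R₁ ⊆ R₂)
    (h : Disjoint L₂ R₂) : (mix L₁ R₁).Sublist (mix L₂ R₂) := by
  rw [mix_eq_map_mem_of_subset hL (h.mono_right hR)]
  exact (Finset.sort_sublist_sort_of_subset _ (Finset.union_subset_union hL hR)).map _

theorem mixValue_mono (L₁ L₂ R₁ R₂ : Finset ℝ)
    (hL : L₁ ⊆ L₂) (hR : R₁ ⊆ R₂) (h : Disjoint L₂ R₂) :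
    mixValue L₁ R₁ ≤ mixValue L₂ R₂ :=
  blocks_le_of_sublist (mix_sublist_mix hL hR h)
end

section
/- mixValue is subadditive under concatenation: if L₁, R₁ ⊆ (−∞, x] and L₂, R₂ ⊆ [x, +∞) are finite sets with L₁ ∪ L₂ disjoint from R₁ ∪ R₂, then mixValue(L₁ ∪ L₂, R₁ ∪ R₂) ≤ mixValue(L₁,R₁) + mixValue(L₂,R₂). -/
lemma blocks_append_le : ∀ s t : List Bool, blocks (s ++ t) ≤ blocks s + blocks t
  | [], t => by simp [blocks]
  | [a], [] => by simp [blocks]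
  | [a], b :: t => by simp only [List.singleton_append, blocks]; split <;> omega
  | a :: b :: s, t => by
    simp only [List.cons_append, blocks]
    have := blocks_append_le (b :: s) t
    simp only [List.cons_append] at this
    omega

namespace Finset

variable {α : Type*}

lemma sort_sublist_sort_of_subset_s2 [LinearOrder α] {s t : Finset α} (h : s ⊆ t) :
    s.sort.Sublist t.sort :=
  List.sublist_of_subperm_of_pairwise
    (List.subperm_of_subset (sort_nodup _ _) fun _ ha => (mem_sort _).2 (h ((mem_sort _).1 ha)))
    (pairwise_sort _ _) (pairwise_sort _ _)

lemma sort_union_of_forall_le [LinearOrder α] {s t : Finset α} (hst : Disjoint s t)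
    (hle : ∀ a ∈ s, ∀ b ∈ t, a ≤ b) : (s ∪ t).sort = s.sort ++ t.sort := by
  refine List.Perm.eq_of_pairwise' (pairwise_sort _ _) ?_ ?_
  · exact List.pairwise_append.2 ⟨pairwise_sort _ _, pairwise_sort _ _,
      fun a ha b hb => hle a ((mem_sort _).1 ha) b ((mem_sort _).1 hb)⟩
  · rw [← Multiset.coe_eq_coe, ← Multiset.coe_add, sort_eq, sort_eq, sort_eq,
      ← disjUnion_eq_union s t hst, disjUnion_val]

lemma mem_union_iff_mem_left_of_disjoint [DecidableEq α] {L₁ L₂ R₁ R₂ : Finset α}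
    (h : Disjoint (L₁ ∪ L₂) (R₁ ∪ R₂)) {y : α} (hy : y ∈ L₁ ∪ R₁) : y ∈ L₁ ∪ L₂ ↔ y ∈ L₁ := by
  refine ⟨fun hy' => (mem_union.1 hy).resolve_right fun hR => ?_, mem_union_left L₂⟩
  exact disjoint_left.1 h hy' (mem_union_left R₂ hR)

end Finset

theorem mixValue_subadditive (x : ℝ) (L₁ R₁ L₂ R₂ : Finset ℝ)
    (hL₁ : ∀ a ∈ L₁, a ≤ x) (hR₁ : ∀ a ∈ R₁, a ≤ x)
    (hL₂ : ∀ a ∈ L₂, x ≤ a) (hR₂ : ∀ a ∈ R₂, x ≤ a)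
    (h : Disjoint (L₁ ∪ L₂) (R₁ ∪ R₂)) :
    mixValue (L₁ ∪ L₂) (R₁ ∪ R₂) ≤ mixValue L₁ R₁ + mixValue L₂ R₂ := by
  set A := L₁ ∪ R₁
  set B := L₂ ∪ R₂
  have hunion : (L₁ ∪ L₂) ∪ (R₁ ∪ R₂) = A ∪ B \ A := by
    rw [Finset.union_sdiff_self_eq_union, Finset.union_union_union_comm]
  have hsort : (A ∪ B \ A).sort = A.sort ++ (B \ A).sort := by
    refine Finset.sort_union_of_forall_le Finset.disjoint_sdiff fun a ha b hb => ?_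
    have hax : a ≤ x := (Finset.mem_union.1 ha).elim (hL₁ a) (hR₁ a)
    have hxb : x ≤ b := (Finset.mem_union.1 (Finset.mem_sdiff.1 hb).1).elim (hL₂ b) (hR₂ b)
    exact hax.trans hxb
  have hlabel₁ : ∀ y ∈ A.sort, decide (y ∈ L₁ ∪ L₂) = decide (y ∈ L₁) := fun y hy =>
    decide_eq_decide.2 (Finset.mem_union_iff_mem_left_of_disjoint h ((Finset.mem_sort _).1 hy))
  have hlabel₂ : ∀ y ∈ (B \ A).sort, decide (y ∈ L₁ ∪ L₂) = decide (y ∈ L₂) := fun y hy => by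
    rw [Finset.union_comm L₁, Finset.union_comm R₁] at h
    rw [Finset.union_comm L₁]
    exact decide_eq_decide.2 (Finset.mem_union_iff_mem_left_of_disjoint h
      (Finset.mem_sdiff.1 ((Finset.mem_sort _).1 hy)).1)
  calc mixValue (L₁ ∪ L₂) (R₁ ∪ R₂)
      = blocks (A.sort.map (fun y => decide (y ∈ L₁)) ++
          (B \ A).sort.map (fun y => decide (y ∈ L₂))) := by
        rw [mixValue, mix, hunion, hsort, List.map_append, List.map_congr_left hlabel₁,
          List.map_congr_left hlabel₂]
    _ ≤ mixValue L₁ R₁ + blocks ((B \ A).sort.map (fun y => decide (y ∈ L₂))) :=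
        blocks_append_le _ _
    _ ≤ mixValue L₁ R₁ + mixValue L₂ R₂ := Nat.add_le_add_left
        (blocks_le_of_sublist ((Finset.sort_sublist_sort_of_subset_s2 Finset.sdiff_subset).map _)) _
end

section
/- Funnel is superadditive under vertical concatenation: if P = P₁ ∪ P₂ are finite point sets with distinct y-coordinates such that every point of P₁ has strictly smaller y-coordinate than every point of P₂, then Funnel(P) ≥ Funnel(P₁) + Funnel(P₂). -/
/-- Membership in the minimal axis-aligned rectangle spanned by `p` and `q`. -/
def inRect (p q t : ℝ × ℝ) : Prop :=
  min p.1 q.1 ≤ t.1 ∧ t.1 ≤ max p.1 q.1 ∧ min p.2 q.2 ≤ t.2 ∧ t.2 ≤ max p.2 q.2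

noncomputable instance (p q t : ℝ × ℝ) : Decidable (inRect p q t) := by
  unfold inRect; infer_instance

/-- The left funnel of `p` within `P`. -/
noncomputable def FL (P : Finset (ℝ × ℝ)) (p : ℝ × ℝ) : Finset (ℝ × ℝ) :=
  P.filter (fun q => q.2 < p.2 ∧ q.1 < p.1 ∧ ∀ t ∈ P, inRect p q t → t = p ∨ t = q)

/-- The right funnel of `p` within `P`. -/
noncomputable def FR (P : Finset (ℝ × ℝ)) (p : ℝ × ℝ) : Finset (ℝ × ℝ) :=
  P.filter (fun q => q.2 < p.2 ∧ q.1 > p.1 ∧ ∀ t ∈ P, inRect p q t → t = p ∨ t = q)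

/-- The funnel contribution `f(P,p)`. -/
noncomputable def fContrib (P : Finset (ℝ × ℝ)) (p : ℝ × ℝ) : ℕ :=
  mixValue ((FL P p).image Prod.snd) ((FR P p).image Prod.snd)

/-- Wilber's Funnel bound. -/
noncomputable def Funnel (P : Finset (ℝ × ℝ)) : ℕ := ∑ p ∈ P, fContrib P p

/-- All points of `P` have distinct `y`-coordinates. -/
def DistinctY (P : Finset (ℝ × ℝ)) : Prop :=
  ∀ p ∈ P, ∀ q ∈ P, p.2 = q.2 → p = q

/-- All points of `P` have distinct `x`-coordinates. -/
def DistinctX (P : Finset (ℝ × ℝ)) : Prop :=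
  ∀ p ∈ P, ∀ q ∈ P, p.1 = q.1 → p = q

lemma blocks_le_blocks_append (A B : List Bool) : blocks B ≤ blocks (A ++ B) := by
  induction A with
  | nil => simp
  | cons a A ih => exact ih.trans (blocks_le_blocks_cons a (A ++ B))

lemma Finset.sort_union_of_forall_lt {α : Type*} [LinearOrder α] {A B : Finset α}
    (h : ∀ a ∈ A, ∀ b ∈ B, a < b) :
    (A ∪ B).sort (· ≤ ·) = A.sort (· ≤ ·) ++ B.sort (· ≤ ·) := by
  have hdisj : Disjoint A B :=
    Finset.disjoint_left.mpr fun a ha hb => (h a ha a hb).false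
  refine List.Perm.eq_of_pairwise' (Finset.pairwise_sort _ _) ?_ ?_
  · rw [List.pairwise_append]
    refine ⟨Finset.pairwise_sort _ _, Finset.pairwise_sort _ _, fun a ha b hb => ?_⟩
    exact (h a ((Finset.mem_sort _).mp ha) b ((Finset.mem_sort _).mp hb)).le
  · rw [← Multiset.coe_eq_coe, ← Multiset.coe_add, Finset.sort_eq, Finset.sort_eq,
      Finset.sort_eq, ← Finset.disjUnion_eq_union A B hdisj]
    rfl

lemma mixValue_le_mixValue_union_of_forall_lt {L₁ R₁ L₂ R₂ : Finset ℝ}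
    (h : ∀ a ∈ L₁ ∪ R₁, ∀ b ∈ L₂ ∪ R₂, a < b) :
    mixValue L₂ R₂ ≤ mixValue (L₁ ∪ L₂) (R₁ ∪ R₂) := by
  unfold mixValue mix
  rw [Finset.union_union_union_comm, Finset.sort_union_of_forall_lt h, List.map_append]
  have hlabel : ∀ x ∈ (L₂ ∪ R₂).sort (· ≤ ·), decide (x ∈ L₁ ∪ L₂) = decide (x ∈ L₂) := by
    intro x hx
    have hx₁ : x ∉ L₁ := fun hx₁ =>
      (h x (Finset.mem_union_left _ hx₁) x ((Finset.mem_sort _).mp hx)).false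
    simp [hx₁]
  rw [List.map_congr_left hlabel]
  exact blocks_le_blocks_append _ _

/-- `F_L(P,p) ∪ F_R(P,p)` is this set minus its points on the vertical line through `p`. -/
noncomputable def lowerNeighbors (P : Finset (ℝ × ℝ)) (p : ℝ × ℝ) : Finset (ℝ × ℝ) :=
  P.filter (fun q => q.2 < p.2 ∧ ∀ t ∈ P, inRect p q t → t = p ∨ t = q)

noncomputable def splitMixValue (D : Finset (ℝ × ℝ)) (x : ℝ) : ℕ :=
  mixValue ((D.filter (·.1 < x)).image Prod.snd) ((D.filter (x < ·.1)).image Prod.snd)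

lemma fContrib_eq_splitMixValue (P : Finset (ℝ × ℝ)) (p : ℝ × ℝ) :
    fContrib P p = splitMixValue (lowerNeighbors P p) p.1 := by
  have hFL : FL P p = (lowerNeighbors P p).filter (·.1 < p.1) := by
    ext q; simp only [FL, lowerNeighbors, Finset.mem_filter]; tauto
  have hFR : FR P p = (lowerNeighbors P p).filter (p.1 < ·.1) := by
    ext q; simp only [FR, lowerNeighbors, Finset.mem_filter, gt_iff_lt]; tauto
  rw [fContrib, splitMixValue, hFL, hFR]

lemma splitMixValue_le_splitMixValue_union {D₁ D₂ : Finset (ℝ × ℝ)}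
    (h : ∀ a ∈ D₁, ∀ b ∈ D₂, a.2 < b.2) (x : ℝ) :
    splitMixValue D₂ x ≤ splitMixValue (D₁ ∪ D₂) x := by
  unfold splitMixValue
  simp only [Finset.filter_union, Finset.image_union]
  apply mixValue_le_mixValue_union_of_forall_lt
  simp only [← Finset.image_union, Finset.mem_image]
  have hsub (D : Finset (ℝ × ℝ)) : D.filter (·.1 < x) ∪ D.filter (x < ·.1) ⊆ D :=
    Finset.union_subset (Finset.filter_subset _ _) (Finset.filter_subset _ _)
  rintro _ ⟨a, ha, rfl⟩ _ ⟨b, hb, rfl⟩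
  exact h a (hsub D₁ ha) b (hsub D₂ hb)

lemma emptyRect_union_iff {A B : Finset (ℝ × ℝ)} {p q : ℝ × ℝ}
    (hB : ∀ t ∈ B, ¬ inRect p q t) :
    (∀ t ∈ A ∪ B, inRect p q t → t = p ∨ t = q) ↔ ∀ t ∈ A, inRect p q t → t = p ∨ t = q := by
  simp only [Finset.mem_union]
  exact ⟨fun hAB t ht => hAB t (Or.inl ht),
    fun hA t ht hr => ht.elim (hA t · hr) fun ht => (hB t ht hr).elim⟩

lemma lowerNeighbors_union_of_mem_left {P₁ P₂ : Finset (ℝ × ℝ)}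
    (hy : ∀ p ∈ P₁, ∀ q ∈ P₂, p.2 < q.2) {p : ℝ × ℝ} (hp : p ∈ P₁) :
    lowerNeighbors (P₁ ∪ P₂) p = lowerNeighbors P₁ p := by
  ext q
  simp only [lowerNeighbors, Finset.mem_filter]
  by_cases hq : q.2 < p.2
  · have hP₂ : ∀ t ∈ P₂, ¬ inRect p q t := fun t ht hr =>
      (hy p hp t ht).not_ge (hr.2.2.2.trans (max_eq_left hq.le).le)
    have hq₂ : q ∉ P₂ := fun hq₂ => (hy p hp q hq₂).not_gt hq
    rw [emptyRect_union_iff hP₂, Finset.mem_union, or_iff_left hq₂]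
  · simp [hq]

lemma lowerNeighbors_union {P₁ P₂ : Finset (ℝ × ℝ)}
    (hy : ∀ p ∈ P₁, ∀ q ∈ P₂, p.2 < q.2) (p : ℝ × ℝ) :
    lowerNeighbors (P₁ ∪ P₂) p =
      (lowerNeighbors (P₁ ∪ P₂) p).filter (· ∈ P₁) ∪ lowerNeighbors P₂ p := by
  ext q
  by_cases hq₁ : q ∈ P₁
  · have hq₂ : q ∉ P₂ := fun hq₂ => (hy q hq₁ q hq₂).false
    simp [lowerNeighbors, hq₁, hq₂]
  by_cases hq₂ : q ∈ P₂
  · have hP₁ : ∀ t ∈ P₁, q.2 < p.2 → ¬ inRect p q t := fun t ht hq hr =>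
      (hy t ht q hq₂).not_ge ((min_eq_right hq.le).symm.le.trans hr.2.2.1)
    simp only [Finset.mem_union, Finset.mem_filter, hq₁, and_false, false_or]
    simp only [lowerNeighbors, Finset.mem_filter, Finset.mem_union_right P₁ hq₂, hq₂, true_and]
    refine and_congr_right fun hq => ?_
    rw [Finset.union_comm]
    exact emptyRect_union_iff fun t ht => hP₁ t ht hq
  · simp [lowerNeighbors, hq₁, hq₂]

lemma fContrib_union_of_mem_left {P₁ P₂ : Finset (ℝ × ℝ)}
    (hy : ∀ p ∈ P₁, ∀ q ∈ P₂, p.2 < q.2) {p : ℝ × ℝ} (hp : p ∈ P₁) :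
    fContrib (P₁ ∪ P₂) p = fContrib P₁ p := by
  rw [fContrib_eq_splitMixValue, fContrib_eq_splitMixValue,
    lowerNeighbors_union_of_mem_left hy hp]

lemma fContrib_le_fContrib_union {P₁ P₂ : Finset (ℝ × ℝ)}
    (hy : ∀ p ∈ P₁, ∀ q ∈ P₂, p.2 < q.2) (p : ℝ × ℝ) :
    fContrib P₂ p ≤ fContrib (P₁ ∪ P₂) p := by
  rw [fContrib_eq_splitMixValue, fContrib_eq_splitMixValue, lowerNeighbors_union hy p]
  refine splitMixValue_le_splitMixValue_union (fun a ha b hb => ?_) _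
  exact hy a (Finset.mem_filter.mp ha).2 b (Finset.mem_filter.mp hb).1

theorem funnel_superadditive_concat_general (P P₁ P₂ : Finset (ℝ × ℝ))
    (hunion : P = P₁ ∪ P₂)
    (hy : ∀ p ∈ P₁, ∀ q ∈ P₂, p.2 < q.2) :
    Funnel P ≥ Funnel P₁ + Funnel P₂ := by
  subst hunion
  have hdisj : Disjoint P₁ P₂ :=
    Finset.disjoint_left.mpr fun a h₁ h₂ => (hy a h₁ a h₂).false
  rw [Funnel, Finset.sum_union hdisj]
  exact add_le_add
    (Finset.sum_le_sum fun p hp => (fContrib_union_of_mem_left hy hp).ge)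
    (Finset.sum_le_sum fun p _ => fContrib_le_fContrib_union hy p)

theorem funnel_superadditive_concat (P P₁ P₂ : Finset (ℝ × ℝ))
    (hunion : P = P₁ ∪ P₂)
    (hy : ∀ p ∈ P₁, ∀ q ∈ P₂, p.2 < q.2)
    (hY : DistinctY P) :
    Funnel P ≥ Funnel P₁ + Funnel P₂ :=
  funnel_superadditive_concat_general P P₁ P₂ hunion hy
end

section
/- For a finite point set P with distinct x- and y-coordinates, Funnel(P) ≥ 2·zRects(P). More specifically, for each p ∈ P, if P contains k z-rectangles whose top point is p, then f(P,p) ≥ 2k. -/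
/-- `(p,q,r,s)` is a z-rectangle of `P`. -/
def IsZRect (P : Finset (ℝ × ℝ)) (p q r s : ℝ × ℝ) : Prop :=
  p ∈ P ∧ q ∈ P ∧ r ∈ P ∧ s ∈ P ∧
  q.1 < p.1 ∧ p.1 < r.1 ∧ r.1 < s.1 ∧
  r.2 < q.2 ∧ q.2 < s.2 ∧ s.2 < p.2 ∧
  ∀ t ∈ P, q.1 ≤ t.1 → t.1 ≤ s.1 → r.2 ≤ t.2 → t.2 ≤ p.2 →
    (t = p ∨ t = q ∨ t = r ∨ t = s)

noncomputable instance (P : Finset (ℝ × ℝ)) (p q r s : ℝ × ℝ) : Decidable (IsZRect P p q r s) := by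
  unfold IsZRect; infer_instance

/-- The number of z-rectangles of `P`. -/
noncomputable def zRects (P : Finset (ℝ × ℝ)) : ℕ :=
  ((P ×ˢ P ×ˢ P ×ˢ P).filter
    (fun t => IsZRect P t.1 t.2.1 t.2.2.1 t.2.2.2)).card

/-- The number of z-rectangles of `P` whose top point is `p`. -/
noncomputable def zRectsTop (P : Finset (ℝ × ℝ)) (p : ℝ × ℝ) : ℕ :=
  ((P ×ˢ P ×ˢ P).filter (fun t => IsZRect P p t.1 t.2.1 t.2.2)).card

/-! Fix the top point `p`. A z-rectangle `(p, q, r, s)` is determined by its left point `q`, which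
lies in the left funnel of `p`, and its bottom point `r` lies in the right funnel. If `q` is lower
than `q'`, then `q` is also lower than the bottom point `r'` of the rectangle of `q'`. So listing
the left points by height, each preceded by the bottom point of its rectangle, gives a subsequence
of the merged funnel that alternates between the two sides and has length `2k`; and the number of
blocks of a sequence is the length of its longest alternating subsequence. -/

open Finset

lemma blocks_cons_eq_length_destutter' (a : Bool) (l : List Bool) :
    blocks (a :: l) = (l.destutter' (· ≠ ·) a).length := by
  induction l generalizing a with
  | nil => rfl
  | cons b l ih =>
    by_cases hab : a = b
    · subst hab
      simp [blocks, ih]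
    · simp [blocks, ih, hab, Nat.add_comm]

lemma blocks_eq_length_destutter (l : List Bool) : blocks l = (l.destutter (· ≠ ·)).length := by
  cases l with
  | nil => rfl
  | cons a l => rw [List.destutter_cons', blocks_cons_eq_length_destutter']

lemma length_le_mixValue {L R : Finset ℝ} {l : List ℝ} (hl : l.Pairwise (· < ·))
    (hmem : ∀ x ∈ l, x ∈ L ∪ R) (halt : (l.map fun x => decide (x ∈ L)).IsChain (· ≠ ·)) :
    l.length ≤ mixValue L R := by
  have hsub : l.Sublist ((L ∪ R).sort (· ≤ ·)) :=
    List.sublist_of_subperm_of_pairwise (hl.nodup.subperm fun x hx => (mem_sort _).2 (hmem x hx))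
      (hl.imp le_of_lt) (pairwise_sort _ _)
  rw [mixValue, blocks_eq_length_destutter, ← List.length_map (f := fun x => decide (x ∈ L))]
  exact halt.length_le_length_destutter_ne (hsub.map _)

lemma isChain_ne_flatMap_false_true {α : Type*} (xs : List α) :
    (xs.flatMap fun _ => [false, true]).IsChain (· ≠ ·) := by
  induction xs with
  | nil => simp
  | cons x xs ih => cases xs <;> simp_all [List.isChain_cons_cons]

lemma two_mul_card_le_mixValue {L R Q : Finset ℝ} (hLR : Disjoint L R) (hQL : Q ⊆ L)
    (hsep : ∀ y ∈ Q, ∃ c ∈ R, c < y ∧ ∀ y' ∈ Q, y' < y → y' < c) :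
    2 * #Q ≤ mixValue L R := by
  choose! c hcR hcy hc using hsep
  set l := (Q.sort (· ≤ ·)).flatMap fun y => [c y, y]
  have hlen : l.length = 2 * #Q := by
    simp [l, List.length_flatMap, mul_comm]
  have hsorted : l.Pairwise (· < ·) := by
    refine List.pairwise_flatMap.2 ⟨fun y hy => ?_, ?_⟩
    · simpa using hcy y ((mem_sort _).1 hy)
    · refine (sortedLT_sort Q).pairwise.imp_of_mem fun {y y'} hy hy' hlt => ?_
      rw [mem_sort] at hy hy'
      have hcy_lt : c y < y := hcy y hy
      have hy_lt : y < c y' := hc y' hy' y hy hlt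
      simp only [List.mem_cons, List.not_mem_nil, or_false, forall_eq_or_imp, forall_eq]
      refine ⟨⟨?_, ?_⟩, ?_, ?_⟩ <;> linarith
  have hmem : ∀ x ∈ l, x ∈ L ∪ R := by
    simp only [l, List.mem_flatMap, mem_sort, List.mem_cons, List.not_mem_nil, or_false]
    rintro x ⟨y, hy, rfl | rfl⟩
    · exact mem_union_right _ (hcR y hy)
    · exact mem_union_left _ (hQL hy)
  have halt : (l.map fun x => decide (x ∈ L)).IsChain (· ≠ ·) := by
    rw [List.map_flatMap, List.flatMap_congr (g := fun _ => [false, true])]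
    · exact isChain_ne_flatMap_false_true _
    · intro y hy
      rw [mem_sort] at hy
      simp [hQL hy, disjoint_right.1 hLR (hcR y hy)]
  exact hlen ▸ length_le_mixValue hsorted hmem halt

namespace IsZRect

variable {P : Finset (ℝ × ℝ)} {p q r s : ℝ × ℝ}

lemma left_mem_FL (h : IsZRect P p q r s) : q ∈ FL P p := by
  obtain ⟨-, hq, -, -, h1, h2, h3, h4, h5, h6, hempty⟩ := h
  have hy : q.2 < p.2 := by linarith
  refine mem_filter.2 ⟨hq, hy, h1, fun t ht hin => ?_⟩
  simp only [inRect, min_eq_right h1.le, max_eq_left h1.le, min_eq_right hy.le,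
    max_eq_left hy.le] at hin
  obtain ⟨ht1, ht2, ht3, ht4⟩ := hin
  rcases hempty t ht ht1 (by linarith) (by linarith) ht4 with rfl | rfl | rfl | rfl
    <;> first | tauto | linarith

lemma bottom_mem_FR (h : IsZRect P p q r s) : r ∈ FR P p := by
  obtain ⟨-, -, hr, -, h1, h2, h3, h4, h5, h6, hempty⟩ := h
  have hy : r.2 < p.2 := by linarith
  refine mem_filter.2 ⟨hr, hy, h2, fun t ht hin => ?_⟩
  simp only [inRect, min_eq_left h2.le, max_eq_right h2.le, min_eq_right hy.le,
    max_eq_left hy.le] at hin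
  obtain ⟨ht1, ht2, ht3, ht4⟩ := hin
  rcases hempty t ht (by linarith) (by linarith) ht3 ht4 with rfl | rfl | rfl | rfl
    <;> first | tauto | linarith

lemma right_le_right {r' s' : ℝ × ℝ} (h : IsZRect P p q r s) (h' : IsZRect P p q r' s') :
    s.1 ≤ s'.1 := by
  obtain ⟨-, -, -, -, h1, h2, h3, h4, h5, h6, hempty⟩ := h
  obtain ⟨-, -, -, hs', h1', h2', h3', h4', h5', h6', -⟩ := h'
  by_contra! hlt
  rcases hempty s' hs' (by linarith) hlt.le (by linarith) h6'.le with rfl | rfl | rfl | rfl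
    <;> linarith

lemma bottom_le_bottom {r' : ℝ × ℝ} (h : IsZRect P p q r s) (h' : IsZRect P p q r' s) :
    r'.2 ≤ r.2 := by
  obtain ⟨-, -, -, -, h1, h2, h3, h4, h5, h6, hempty⟩ := h
  obtain ⟨-, -, hr', -, h1', h2', h3', h4', h5', h6', -⟩ := h'
  by_contra! hlt
  rcases hempty r' hr' (by linarith) h3'.le hlt.le (by linarith) with rfl | rfl | rfl | rfl
    <;> linarith

lemma unique {r' s' : ℝ × ℝ} (hX : DistinctX P) (hY : DistinctY P) (h : IsZRect P p q r s)
    (h' : IsZRect P p q r' s') : r = r' ∧ s = s' := by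
  obtain rfl : s = s' :=
    hX s h.2.2.2.1 s' h'.2.2.2.1 ((h.right_le_right h').antisymm (h'.right_le_right h))
  exact ⟨hY r h.2.2.1 r' h'.2.2.1 ((h'.bottom_le_bottom h).antisymm (h.bottom_le_bottom h')), rfl⟩

lemma left_lt_bottom {q' r' s' : ℝ × ℝ} (hX : DistinctX P) (h : IsZRect P p q r s)
    (h' : IsZRect P p q' r' s') (hy : q.2 < q'.2) : q.2 < r'.2 := by
  obtain ⟨-, hq, -, -, h1, h2, h3, h4, h5, h6, hempty⟩ := h
  obtain ⟨-, hq', -, -, h1', h2', h3', h4', h5', h6', hempty'⟩ := h'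
  by_contra! hle
  rcases lt_trichotomy q.1 q'.1 with hlt | heq | hgt
  · rcases hempty q' hq' hlt.le (by linarith) (by linarith) (by linarith) with rfl | rfl | rfl | rfl
      <;> linarith
  · exact hy.ne (congrArg _ (hX q hq q' hq' heq))
  · rcases hempty' q hq hgt.le (by linarith) hle (by linarith) with rfl | rfl | rfl | rfl
      <;> linarith

end IsZRect

lemma disjoint_image_snd_FL_FR {P : Finset (ℝ × ℝ)} (hY : DistinctY P) (p : ℝ × ℝ) :
    Disjoint ((FL P p).image Prod.snd) ((FR P p).image Prod.snd) := by
  simp only [disjoint_left, mem_image, not_exists, not_and]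
  rintro _ ⟨a, ha, rfl⟩ b hb hba
  obtain ⟨haP, -, hap, -⟩ := mem_filter.1 ha
  obtain ⟨hbP, -, hbp, -⟩ := mem_filter.1 hb
  rw [hY b hbP a haP hba] at hbp
  linarith

lemma two_mul_zRectsTop_le_fContrib {P : Finset (ℝ × ℝ)} (hX : DistinctX P) (hY : DistinctY P)
    (p : ℝ × ℝ) : 2 * zRectsTop P p ≤ fContrib P p := by
  set S := (P ×ˢ P ×ˢ P).filter fun t => IsZRect P p t.1 t.2.1 t.2.2
  have hinj : Set.InjOn (fun t : (ℝ × ℝ) × (ℝ × ℝ) × (ℝ × ℝ) => t.1.2) S := by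
    rintro ⟨q, r, s⟩ h ⟨q', r', s'⟩ h' (hqq' : q.2 = q'.2)
    have h := (mem_filter.1 h).2
    have h' := (mem_filter.1 h').2
    obtain rfl : q = q' := hY _ h.2.1 _ h'.2.1 hqq'
    obtain ⟨rfl, rfl⟩ := h.unique hX hY h'
    rfl
  rw [zRectsTop, ← card_image_of_injOn hinj, fContrib]
  refine two_mul_card_le_mixValue (disjoint_image_snd_FL_FR hY p) ?_ ?_
  · simp only [subset_iff, mem_image]
    rintro _ ⟨⟨q, r, s⟩, h, rfl⟩
    exact ⟨q, (mem_filter.1 h).2.left_mem_FL, rfl⟩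
  · simp only [mem_image, forall_exists_index, and_imp]
    rintro _ ⟨q, r, s⟩ h rfl
    have h := (mem_filter.1 h).2
    have hrq : r.2 < q.2 := h.2.2.2.2.2.2.2.1
    refine ⟨r.2, ⟨r, h.bottom_mem_FR, rfl⟩, hrq, ?_⟩
    rintro _ ⟨q', r', s'⟩ h' rfl hlt
    exact (mem_filter.1 h').2.left_lt_bottom hX h hlt

lemma zRects_eq_sum_zRectsTop (P : Finset (ℝ × ℝ)) : zRects P = ∑ p ∈ P, zRectsTop P p := by
  simp only [zRects, zRectsTop, card_filter, sum_product]

theorem funnel_ge_two_zRects (P : Finset (ℝ × ℝ))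
    (hX : DistinctX P) (hY : DistinctY P) :
    Funnel P ≥ 2 * zRects P ∧ ∀ p ∈ P, fContrib P p ≥ 2 * zRectsTop P p := by
  refine ⟨?_, fun p _ => two_mul_zRectsTop_le_fContrib hX hY p⟩
  calc 2 * zRects P = ∑ p ∈ P, 2 * zRectsTop P p := by rw [zRects_eq_sum_zRectsTop, mul_sum]
    _ ≤ ∑ p ∈ P, fContrib P p := sum_le_sum fun p _ => two_mul_zRectsTop_le_fContrib hX hY p
end

section
/- For a finite point set P with distinct x- and y-coordinates of size m, zRects(P) ≥ Funnel(P)/2 − 2m. In particular, for each p ∈ P, the number of z-rectangles with top point p is at least ⌊f(P,p)/2⌋ − 1. -/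
open Finset

def rlrPositions (b : List Bool) : Finset ℕ :=
  (range b.length).filter fun i =>
    b[i]? = some false ∧ b[i + 1]? = some true ∧ false ∈ b.drop (i + 2)

theorem mem_rlrPositions_map {α : Type*} {l : List α} {f : α → Bool} {i : ℕ} :
    i ∈ rlrPositions (l.map f) ↔ ∃ h : i + 1 < l.length, f l[i] = false ∧ f l[i + 1] = true ∧
      ∃ j, ∃ hj : j < l.length, i + 1 < j ∧ f l[j] = false := by
  simp only [rlrPositions, mem_filter, mem_range, List.length_map, List.getElem?_map,
    Option.map_eq_some_iff, List.getElem?_eq_some_iff, ← List.map_drop, List.mem_map,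
    List.mem_drop_iff_getElem]
  constructor
  · rintro ⟨-, ⟨_, ⟨_, rfl⟩, h0⟩, ⟨_, ⟨hi, rfl⟩, h1⟩, _, ⟨k, hk, rfl⟩, hs⟩
    exact ⟨hi, h0, h1, i + 2 + k, by omega, by omega, hs⟩
  · rintro ⟨hi, h0, h1, j, hj, hij, hs⟩
    refine ⟨by omega, ⟨_, ⟨by omega, rfl⟩, h0⟩, ⟨_, ⟨hi, rfl⟩, h1⟩, _,
      ⟨j - (i + 2), by omega, rfl⟩, ?_⟩
    simpa [show i + 2 + (j - (i + 2)) = j by omega] using hs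

theorem card_rlrPositions_cons (a : Bool) (b : List Bool) :
    #(rlrPositions (a :: b)) =
      #(rlrPositions b) + if a = false ∧ b[0]? = some true ∧ false ∈ b.drop 1 then 1 else 0 := by
  simp only [rlrPositions, card_filter, List.length_cons, sum_range_succ', List.getElem?_cons_succ,
    List.drop_succ_cons]
  simp

theorem blocks_cons_of_forall_eq {a : Bool} {l : List Bool} (h : ∀ x ∈ l, x = a) :
    blocks (a :: l) = 1 := by
  induction l with
  | nil => rfl
  | cons c l ih =>
    obtain rfl : c = a := h c List.mem_cons_self
    simp [blocks, ih fun x hx => h x (List.mem_cons_of_mem _ hx)]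

-- A leading `false` is the slack that pays for the block change in `true :: false :: _`.
theorem blocks_add_ite_le (b : List Bool) :
    blocks b + (if b.head? = some false then 1 else 0) ≤ 2 * #(rlrPositions b) + 3 := by
  match b with
  | [] => simp [blocks]
  | [a] => cases a <;> simp [blocks]
  | a :: c :: l =>
    have ih := blocks_add_ite_le (c :: l)
    have hcard := card_rlrPositions_cons a (c :: l)
    have hblocks : blocks (a :: c :: l) = (if a = c then 0 else 1) + blocks (c :: l) := rfl
    cases a <;> cases c <;>
      simp only [List.head?_cons, List.getElem?_cons_zero, List.drop_succ_cons, List.drop_zero,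
        Option.some.injEq, Bool.false_eq_true, Bool.true_eq_false, true_and, false_and, and_self,
        and_false, if_true, if_false, add_zero, zero_add] at ih hcard hblocks ⊢
    case false.true =>
      by_cases hl : false ∈ l
      · simp only [hl, if_true] at hcard
        omega
      · have hall : ∀ x ∈ l, x = true := fun x hx => by cases x <;> simp_all
        have := blocks_cons_of_forall_eq hall
        omega
    all_goals omega

noncomputable def rlrMiddles (L R : Finset ℝ) : Finset ℝ :=
  L.filter fun y => (∃ r ∈ R, r < y ∧ ∀ x ∈ L ∪ R, ¬(r < x ∧ x < y)) ∧ ∃ s ∈ R, y < s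

theorem card_rlrPositions_mix_le (L R : Finset ℝ) :
    #(rlrPositions (mix L R)) ≤ #(rlrMiddles L R) := by
  set l := (L ∪ R).sort (· ≤ ·)
  have hsorted : l.SortedLT := sortedLT_sort (L ∪ R)
  have hlt {i j : ℕ} (hi : i < l.length) (hj : j < l.length) : l[i] < l[j] ↔ i < j :=
    hsorted.strictMono_get.lt_iff_lt (a := ⟨i, hi⟩) (b := ⟨j, hj⟩)
  have hmem {i : ℕ} (hi : i < l.length) : l[i] ∈ L ∪ R := (mem_sort _).1 (List.getElem_mem hi)
  have hpos {i : ℕ} (h : i ∈ rlrPositions (mix L R)) :=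
    mem_rlrPositions_map (l := l) (f := fun x => decide (x ∈ L)) |>.1 h
  refine card_le_card_of_injOn (fun i => l.getD (i + 1) 0) (fun i hi => ?_)
    (fun i hi j hj hij => ?_)
  · obtain ⟨hi, h0, h1, j, hj, hij, hs⟩ := hpos hi
    simp only [decide_eq_false_iff_not, decide_eq_true_eq] at h0 h1 hs
    have hR {k : ℕ} (hk : k < l.length) (h : l[k] ∉ L) : l[k] ∈ R :=
      (mem_union.1 (hmem hk)).resolve_left h
    simp only [coe_filter, rlrMiddles, List.getD_eq_getElem _ _ hi]
    refine ⟨h1, ⟨l[i], hR _ h0, (hlt _ _).2 (by omega), ?_⟩, l[j], hR _ hs, (hlt _ _).2 hij⟩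
    rintro x hx ⟨hix, hxi⟩
    obtain ⟨k, hk, rfl⟩ := List.mem_iff_getElem.1 ((mem_sort (· ≤ ·)).2 hx)
    rw [hlt] at hix hxi
    omega
  · obtain ⟨hi, -⟩ := hpos hi
    obtain ⟨hj, -⟩ := hpos hj
    simp only [List.getD_eq_getElem _ _ hi, List.getD_eq_getElem _ _ hj] at hij
    simpa using hsorted.nodup.getElem_inj_iff.1 hij

section Funnel

variable {P : Finset (ℝ × ℝ)} {p q : ℝ × ℝ}

theorem mem_FL :
    q ∈ FL P p ↔ q ∈ P ∧ q.2 < p.2 ∧ q.1 < p.1 ∧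
      ∀ t ∈ P, q.1 ≤ t.1 → t.1 ≤ p.1 → q.2 ≤ t.2 → t.2 ≤ p.2 → t = p ∨ t = q := by
  rw [FL, mem_filter]
  refine and_congr_right fun _ => and_congr_right fun hy => and_congr_right fun hx => ?_
  simp only [inRect, min_eq_right hx.le, max_eq_left hx.le, min_eq_right hy.le,
    max_eq_left hy.le, and_imp]

theorem mem_FR :
    q ∈ FR P p ↔ q ∈ P ∧ q.2 < p.2 ∧ p.1 < q.1 ∧
      ∀ t ∈ P, p.1 ≤ t.1 → t.1 ≤ q.1 → q.2 ≤ t.2 → t.2 ≤ p.2 → t = p ∨ t = q := by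
  rw [FR, mem_filter]
  refine and_congr_right fun _ => and_congr_right fun hy => and_congr_right fun hx => ?_
  simp only [inRect, min_eq_left hx.le, max_eq_right hx.le, min_eq_right hy.le,
    max_eq_left hy.le, and_imp]

theorem FL_fst_lt_of_snd_lt {a b : ℝ × ℝ} (ha : a ∈ FL P p) (hb : b ∈ FL P p)
    (hab : a.2 < b.2) : b.1 < a.1 := by
  obtain ⟨-, -, -, ha⟩ := mem_FL.1 ha
  obtain ⟨hbP, hby, hbx, -⟩ := mem_FL.1 hb
  by_contra! h
  rcases ha b hbP h hbx.le hab.le hby.le with rfl | rfl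
  exacts [lt_irrefl _ hbx, lt_irrefl _ hab]

theorem FR_fst_lt_of_snd_lt {a b : ℝ × ℝ} (ha : a ∈ FR P p) (hb : b ∈ FR P p)
    (hab : a.2 < b.2) : a.1 < b.1 := by
  obtain ⟨-, -, -, ha⟩ := mem_FR.1 ha
  obtain ⟨hbP, hby, hbx, -⟩ := mem_FR.1 hb
  by_contra! h
  rcases ha b hbP hbx.le h hab.le hby.le with rfl | rfl
  exacts [lt_irrefl _ hbx, lt_irrefl _ hab]

-- The witness is the highest point of `P \ {p}` in the rectangle spanned by `p` and `t`.
theorem exists_mem_FL_ge (hX : DistinctX P) (hY : DistinctY P) (hp : p ∈ P) {t : ℝ × ℝ}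
    (ht : t ∈ P) (htx : t.1 < p.1) (hty : t.2 < p.2) :
    ∃ u ∈ FL P p, t.1 ≤ u.1 ∧ t.2 ≤ u.2 := by
  let T := P.filter fun u => u ≠ p ∧ t.1 ≤ u.1 ∧ u.1 ≤ p.1 ∧ t.2 ≤ u.2 ∧ u.2 ≤ p.2
  obtain ⟨u, huT, hmax⟩ := T.exists_max_image Prod.snd
    ⟨t, mem_filter.2 ⟨ht, by rintro rfl; exact lt_irrefl _ hty, le_rfl, htx.le, le_rfl, hty.le⟩⟩
  obtain ⟨huP, hup, h1, h2, h3, h4⟩ := mem_filter.1 huT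
  have hux : u.1 < p.1 := h2.lt_of_ne fun h => hup (hX u huP p hp h)
  have huy : u.2 < p.2 := h4.lt_of_ne fun h => hup (hY u huP p hp h)
  refine ⟨u, mem_FL.2 ⟨huP, huy, hux, fun v hv hv1 hv2 hv3 hv4 => ?_⟩, h1, h3⟩
  by_cases hvp : v = p
  · exact .inl hvp
  have hvT : v ∈ T := mem_filter.2 ⟨hv, hvp, h1.trans hv1, hv2, h3.trans hv3, hv4⟩
  exact .inr (hY v hv u huP ((hmax v hvT).antisymm hv3))

theorem exists_mem_FR_ge (hX : DistinctX P) (hY : DistinctY P) (hp : p ∈ P) {t : ℝ × ℝ}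
    (ht : t ∈ P) (htx : p.1 < t.1) (hty : t.2 < p.2) :
    ∃ u ∈ FR P p, u.1 ≤ t.1 ∧ t.2 ≤ u.2 := by
  let T := P.filter fun u => u ≠ p ∧ p.1 ≤ u.1 ∧ u.1 ≤ t.1 ∧ t.2 ≤ u.2 ∧ u.2 ≤ p.2
  obtain ⟨u, huT, hmax⟩ := T.exists_max_image Prod.snd
    ⟨t, mem_filter.2 ⟨ht, by rintro rfl; exact lt_irrefl _ hty, htx.le, le_rfl, le_rfl, hty.le⟩⟩
  obtain ⟨huP, hup, h1, h2, h3, h4⟩ := mem_filter.1 huT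
  have hux : p.1 < u.1 := h1.lt_of_ne fun h => hup (hX u huP p hp h.symm)
  have huy : u.2 < p.2 := h4.lt_of_ne fun h => hup (hY u huP p hp h)
  refine ⟨u, mem_FR.2 ⟨huP, huy, hux, fun v hv hv1 hv2 hv3 hv4 => ?_⟩, h2, h3⟩
  by_cases hvp : v = p
  · exact .inl hvp
  have hvT : v ∈ T := mem_filter.2 ⟨hv, hvp, hv1, hv2.trans h2, h3.trans hv3, hv4⟩
  exact .inr (hY v hv u huP ((hmax v hvT).antisymm hv3))

/-- Any point of the rectangle other than `p` is dominated by a funnel point on its side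
of `p`; the gap hypotheses force that funnel point to be `q`, `r` or `s`. -/
theorem isZRect_of_funnel (hX : DistinctX P) (hY : DistinctY P) (hp : p ∈ P) {r s : ℝ × ℝ}
    (hq : q ∈ FL P p) (hr : r ∈ FR P p) (hs : s ∈ FR P p) (hrq : r.2 < q.2) (hqs : q.2 < s.2)
    (hL : ∀ u ∈ FL P p, ¬(r.2 < u.2 ∧ u.2 < q.2))
    (hR : ∀ u ∈ FR P p, ¬(r.2 < u.2 ∧ u.2 < s.2)) :
    IsZRect P p q r s := by
  obtain ⟨hqP, -, hqx, -⟩ := mem_FL.1 hq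
  obtain ⟨hrP, -, hrx, -⟩ := mem_FR.1 hr
  obtain ⟨hsP, hsy, -, -⟩ := mem_FR.1 hs
  refine ⟨hp, hqP, hrP, hsP, hqx, hrx, FR_fst_lt_of_snd_lt hr hs (hrq.trans hqs), hrq, hqs, hsy,
    fun t ht h1 h2 h3 h4 => ?_⟩
  by_cases htp : t = p
  · exact .inl htp
  have hty : t.2 < p.2 := h4.lt_of_ne fun h => htp (hY t ht p hp h)
  rcases lt_trichotomy t.1 p.1 with hx | hx | hx
  · obtain ⟨u, hu, htu1, htu2⟩ := exists_mem_FL_ge hX hY hp ht hx hty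
    obtain ⟨huP, -, hux, -⟩ := mem_FL.1 hu
    have hru : r.2 < u.2 := (h3.trans htu2).lt_of_ne fun h =>
      (hux.trans hrx).ne (congrArg Prod.fst (hY u huP r hrP h.symm))
    have huq : u = q := by
      rcases lt_trichotomy u.2 q.2 with h | h | h
      · exact absurd ⟨hru, h⟩ (hL u hu)
      · exact hY u huP q hqP h
      · exact absurd (h1.trans htu1) (FL_fst_lt_of_snd_lt hq hu h).not_ge
    subst huq
    exact .inr (.inl (hX t ht u huP (htu1.antisymm h1)))
  · exact absurd (hX t ht p hp hx) htp
  · obtain ⟨u, hu, htu1, htu2⟩ := exists_mem_FR_ge hX hY hp ht hx hty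
    obtain ⟨huP, -, -, -⟩ := mem_FR.1 hu
    rcases (h3.trans htu2).eq_or_lt with h | hru
    · obtain rfl := hY r hrP u huP h
      exact .inr (.inr (.inl (hY t ht r hrP (htu2.antisymm h3))))
    have hus : u = s := by
      rcases lt_trichotomy u.2 s.2 with h | h | h
      · exact absurd ⟨hru, h⟩ (hR u hu)
      · exact hY u huP s hsP h
      · exact absurd (htu1.trans h2) (FR_fst_lt_of_snd_lt hs hu h).not_ge
    subst hus
    exact .inr (.inr (.inr (hX t ht u huP (h2.antisymm htu1))))

theorem exists_isZRect_of_mem_rlrMiddles (hX : DistinctX P) (hY : DistinctY P) (hp : p ∈ P)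
    {y : ℝ} (hy : y ∈ rlrMiddles ((FL P p).image Prod.snd) ((FR P p).image Prod.snd)) :
    ∃ q r s, IsZRect P p q r s ∧ q.2 = y := by
  simp only [rlrMiddles, mem_filter, mem_image, mem_union] at hy
  obtain ⟨⟨q, hq, rfl⟩, ⟨_, ⟨r, hr, rfl⟩, hrq, hgap⟩, _, ⟨s₀, hs₀, rfl⟩, hqs₀⟩ := hy
  obtain ⟨s, hs, hmin⟩ := ((FR P p).filter (q.2 < ·.2)).exists_min_image Prod.snd
    ⟨s₀, mem_filter.2 ⟨hs₀, hqs₀⟩⟩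
  obtain ⟨hs, hqs⟩ := mem_filter.1 hs
  refine ⟨q, r, s, isZRect_of_funnel hX hY hp hq hr hs hrq hqs
    (fun u hu => hgap _ (.inl ⟨u, hu, rfl⟩)) (fun u hu ⟨hru, hus⟩ => ?_), rfl⟩
  rcases lt_trichotomy u.2 q.2 with h | h | h
  · exact hgap _ (.inr ⟨u, hu, rfl⟩) ⟨hru, h⟩
  · obtain rfl := hY u (filter_subset _ _ hu) q (filter_subset _ _ hq) h
    exact ((mem_FL.1 hq).2.2.1.trans (mem_FR.1 hu).2.2.1).false
  · exact (hmin u (mem_filter.2 ⟨hu, h⟩)).not_gt hus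

theorem card_rlrMiddles_funnel_le_zRectsTop (hX : DistinctX P) (hY : DistinctY P) (hp : p ∈ P) :
    #(rlrMiddles ((FL P p).image Prod.snd) ((FR P p).image Prod.snd)) ≤ zRectsTop P p := by
  calc #(rlrMiddles ((FL P p).image Prod.snd) ((FR P p).image Prod.snd))
      ≤ #(((P ×ˢ P ×ˢ P).filter fun t => IsZRect P p t.1 t.2.1 t.2.2).image fun t => t.1.2) := by
        refine card_le_card fun y hy => ?_
        obtain ⟨q, r, s, hz, rfl⟩ := exists_isZRect_of_mem_rlrMiddles hX hY hp hy
        refine mem_image.2 ⟨(q, r, s), mem_filter.2 ⟨?_, hz⟩, rfl⟩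
        exact mem_product.2 ⟨hz.2.1, mem_product.2 ⟨hz.2.2.1, hz.2.2.2.1⟩⟩
    _ ≤ zRectsTop P p := card_image_le

theorem fContrib_le_two_mul_zRectsTop_add_three (hX : DistinctX P) (hY : DistinctY P)
    (hp : p ∈ P) : fContrib P p ≤ 2 * zRectsTop P p + 3 :=
  calc fContrib P p
      ≤ 2 * #(rlrPositions (mix ((FL P p).image Prod.snd) ((FR P p).image Prod.snd))) + 3 :=
        (Nat.le_add_right _ _).trans (blocks_add_ite_le _)
    _ ≤ 2 * #(rlrMiddles ((FL P p).image Prod.snd) ((FR P p).image Prod.snd)) + 3 := by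
        grw [card_rlrPositions_mix_le]
    _ ≤ 2 * zRectsTop P p + 3 := by
        grw [card_rlrMiddles_funnel_le_zRectsTop hX hY hp]

end Funnel

theorem sum_zRectsTop_le_zRects (P : Finset (ℝ × ℝ)) : ∑ p ∈ P, zRectsTop P p ≤ zRects P := by
  rw [zRects, card_eq_sum_card_fiberwise (f := Prod.fst) (t := P)
    fun x hx => (mem_filter.1 hx).2.1]
  refine sum_le_sum fun p _ => card_le_card_of_injOn (fun t => (p, t)) (fun t ht => ?_)
    fun _ _ _ _ h => congrArg Prod.snd h
  obtain ⟨ht, hz⟩ := mem_filter.1 ht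
  exact mem_filter.2 ⟨mem_filter.2 ⟨mem_product.2 ⟨hz.1, ht⟩, hz⟩, rfl⟩

theorem zRects_ge_half_funnel (P : Finset (ℝ × ℝ))
    (hX : DistinctX P) (hY : DistinctY P) :
    (zRects P : ℤ) ≥ (Funnel P : ℤ) / 2 - 2 * P.card ∧
    ∀ p ∈ P, (zRectsTop P p : ℤ) ≥ (fContrib P p : ℤ) / 2 - 1 := by
  have hf p (hp : p ∈ P) := fContrib_le_two_mul_zRectsTop_add_three hX hY hp
  refine ⟨?_, fun p hp => ?_⟩
  · have h : Funnel P ≤ 2 * zRects P + 3 * #P :=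
      calc Funnel P ≤ ∑ p ∈ P, (2 * zRectsTop P p + 3) := sum_le_sum hf
        _ = 2 * ∑ p ∈ P, zRectsTop P p + 3 * #P := by
          rw [sum_add_distrib, ← mul_sum, sum_const, smul_eq_mul, mul_comm _ 3]
        _ ≤ 2 * zRects P + 3 * #P := by grw [sum_zRectsTop_le_zRects]
    omega
  · have := hf p hp
    omega
end

section
/- Two z-rectangles sharing the same top point have nested/ordered funnel structure: let P have distinct x- and y-coordinates, and let (p,q₁,r₁,s₁) and (p,q₂,r₂,s₂) be distinct z-rectangles of P with r₁.y < r₂.y. Then q₁.y < s₁.y ≤ r₂.y < q₂.y. -/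
theorem zRects_same_top_ordered (P : Finset (ℝ × ℝ))
    (hX : DistinctX P) (hY : DistinctY P)
    (p q₁ r₁ s₁ q₂ r₂ s₂ : ℝ × ℝ)
    (h₁ : IsZRect P p q₁ r₁ s₁) (h₂ : IsZRect P p q₂ r₂ s₂)
    (hne : (q₁, r₁, s₁) ≠ (q₂, r₂, s₂)) (hr : r₁.2 < r₂.2) :
    q₁.2 < s₁.2 ∧ s₁.2 ≤ r₂.2 ∧ r₂.2 < q₂.2 := by
  obtain ⟨hp1, hq1, hr1, hs1, a1, a2, a3, a4, a5, a6, he1⟩ := h₁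
  obtain ⟨hp2, hq2, hr2, hs2, b1, b2, b3, b4, b5, b6, he2⟩ := h₂
  refine ⟨a5, ?_, b4⟩
  by_contra hlt
  push_neg at hlt
  -- hlt : r₂.2 < s₁.2
  have hrs : s₁.1 < r₂.1 := by
    by_contra hx
    push_neg at hx
    have := he1 r₂ hr2 (by linarith) hx (le_of_lt hr) (by linarith)
    rcases this with h | h | h | h
    · have := congrArg Prod.snd h; linarith
    · have := congrArg Prod.fst h; linarith
    · have := congrArg Prod.snd h; linarith
    · have := congrArg Prod.snd h; linarith
  have := he2 s₁ hs1 (by linarith) (by linarith) (le_of_lt hlt) (le_of_lt a6)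
  rcases this with h | h | h | h
  · have := congrArg Prod.snd h; linarith
  · have := congrArg Prod.fst h; linarith
  · have := congrArg Prod.fst h; linarith
  · have := congrArg Prod.fst h; linarith
end

section
/- Given a z-rectangle (p,q,r,s) of a point set P with distinct x- and y-coordinates, its bottom corners q and s are uniquely determined by p and r: q is the unique point of P in (−∞,p.x) × (r.y,p.y) with maximal x-coordinate, and s is the unique point of P in (p.x,∞) × (r.y,p.y) with minimal x-coordinate. -/
theorem zRect_bottom_corners_unique (P : Finset (ℝ × ℝ))
    (hX : DistinctX P) (hY : DistinctY P)
    (p q r s : ℝ × ℝ) (h : IsZRect P p q r s) :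
    (q.1 < p.1 ∧ r.2 < q.2 ∧ q.2 < p.2 ∧
      ∀ t ∈ P, t.1 < p.1 → r.2 < t.2 → t.2 < p.2 → t.1 ≤ q.1) ∧
    (p.1 < s.1 ∧ r.2 < s.2 ∧ s.2 < p.2 ∧
      ∀ t ∈ P, p.1 < t.1 → r.2 < t.2 → t.2 < p.2 → s.1 ≤ t.1) := by

  obtain ⟨hp, hq, hr, hs, hx1, hx2, hx3, hy1, hy2, hy3, hemp⟩ := h
  constructor
  · refine ⟨hx1, hy1, hy2.trans hy3, ?_⟩
    intro t ht htx hty1 hty2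
    by_contra hc
    push_neg at hc
    have := hemp t ht hc.le (le_of_lt (htx.trans (hx2.trans hx3))) hty1.le hty2.le
    rcases this with h1 | h1 | h1 | h1
    · exact absurd (h1 ▸ htx) (lt_irrefl _)
    · exact absurd (h1 ▸ hc) (lt_irrefl _)
    · exact absurd (h1 ▸ hty1) (lt_irrefl _)
    · exact absurd (h1 ▸ htx) (not_lt.2 (hx2.trans hx3).le)
  · refine ⟨hx2.trans hx3, hy1.trans hy2, hy3, ?_⟩
    intro t ht htx hty1 hty2
    by_contra hc
    push_neg at hc
    have := hemp t ht (le_of_lt (hx1.trans htx)) hc.le hty1.le hty2.le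
    rcases this with h1 | h1 | h1 | h1
    · exact absurd (h1 ▸ htx) (lt_irrefl _)
    · exact absurd (h1 ▸ htx) (not_lt.2 hx1.le)
    · exact absurd (h1 ▸ hty1) (lt_irrefl _)
    · exact absurd (h1 ▸ hc) (lt_irrefl _)
end

section
/- The Alternation bound of the bit-reversal sequence on the complete binary tree equals K·log₂K: for K = 2^k, let bitReversal^k ∈ {0,…,K−1}^K be the sequence whose i-th entry is obtained by reversing the k-bit binary representation of i−1, and let T be the complete binary tree of height k with leaves labeled 0,…,K−1. Then Alt_T(bitReversal^k) = K·k. -/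
/-- A full binary tree with real-labeled leaves. -/
inductive BTree where
  | leaf (x : ℝ) : BTree
  | node (l r : BTree) : BTree

/-- The list of leaf labels, from left to right. -/
def BTree.leaves : BTree → List ℝ
  | .leaf x => [x]
  | .node l r => l.leaves ++ r.leaves

/-- Wilber's Alternation bound of the point set `P` with respect to reference tree `T`. -/
noncomputable def Alt : BTree → Finset (ℝ × ℝ) → ℕ
  | .leaf _, _ => 0
  | .node l r, P =>
      mixValue ((P.filter (fun p => p.1 ∈ l.leaves)).image Prod.snd)
               ((P.filter (fun p => p.1 ∈ r.leaves)).image Prod.snd)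
      + Alt l (P.filter (fun p => p.1 ∈ l.leaves))
      + Alt r (P.filter (fun p => p.1 ∈ r.leaves))

/-- `bitRev k i` reverses the `k`-bit binary representation of `i`. -/
def bitRev : ℕ → ℕ → ℕ
  | 0, _ => 0
  | k + 1, i => (i % 2) * 2 ^ k + bitRev k (i / 2)

/-- The complete binary tree of height `k` with leaves labeled `off, …, off + 2^k - 1`. -/
def completeTree : ℕ → ℕ → BTree
  | 0, off => .leaf (off : ℝ)
  | k + 1, off => .node (completeTree k off) (completeTree k (off + 2 ^ k))

/-- The geometric view of the bit-reversal sequence on `K = 2^k` keys: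
the `i`-th access (for `i ∈ {0,…,K-1}`) is to key `bitRev k i`. -/
noncomputable def bitRevPoints (k : ℕ) : Finset (ℝ × ℝ) :=
  (Finset.range (2 ^ k)).image (fun i => ((bitRev k i : ℝ), (i : ℝ)))

/-! Replace the access times `0, 1, …` of the bit-reversal points by an arbitrary strictly
increasing `t : ℕ → ℝ`. At the root of the complete tree of height `k + 1` the left subtree
receives exactly the accesses at even positions and the right subtree those at odd positions, so
the merged labels alternate and the root contributes `2 ^ (k + 1)`. Moreover each subtree sees a
bit-reversal pattern of height `k` again, with times `j ↦ t (2 * j)` resp. `j ↦ t (2 * j + 1)`,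
so each of the `k` levels of the tree contributes `2 ^ k`. -/

open Finset

lemma blocks_eq_length_of_isChain_ne : ∀ {l : List Bool}, l.IsChain (· ≠ ·) → blocks l = l.length
  | [], _ => rfl
  | [_], _ => rfl
  | a :: b :: l, h => by
      rw [List.isChain_cons_cons] at h
      simp only [blocks, if_neg h.1, blocks_eq_length_of_isChain_ne h.2, List.length_cons]
      omega

lemma blocks_map_range_even (n : ℕ) :
    blocks ((List.range n).map fun i => decide (Even i)) = n := by
  rw [blocks_eq_length_of_isChain_ne, List.length_map, List.length_range]
  rw [List.isChain_map, List.isChain_range]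
  intro m _
  simp [Nat.even_add_one, -Nat.not_even_iff_odd]

lemma sort_image_range_of_strictMono {α : Type*} [LinearOrder α] {t : ℕ → α} (ht : StrictMono t) (n : ℕ) :
    ((range n).image t).sort (· ≤ ·) = (List.range n).map t := by
  have h := StrictMonoOn.map_finsetSort (f := ⟨t, ht.injective⟩) (s := range n) (ht.strictMonoOn _)
  rw [sort_range, map_eq_image] at h
  exact h.symm

lemma image_range_two_mul {α : Type*} [DecidableEq α] (f : ℕ → α) (m : ℕ) :
    (range (2 * m)).image f
      = (range m).image (fun j => f (2 * j)) ∪ (range m).image (fun j => f (2 * j + 1)) := by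
  ext x
  simp only [mem_union, mem_image, mem_range]
  constructor
  · rintro ⟨i, hi, rfl⟩
    obtain ⟨j, rfl | rfl⟩ := Nat.even_or_odd' i
    · exact .inl ⟨j, by omega, rfl⟩
    · exact .inr ⟨j, by omega, rfl⟩
  · rintro (⟨j, hj, rfl⟩ | ⟨j, hj, rfl⟩)
    · exact ⟨2 * j, by omega, rfl⟩
    · exact ⟨2 * j + 1, by omega, rfl⟩

lemma mixValue_image_even_odd {t : ℕ → ℝ} (ht : StrictMono t) (m : ℕ) :
    mixValue ((range m).image fun j => t (2 * j)) ((range m).image fun j => t (2 * j + 1))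
      = 2 * m := by
  have label : ∀ i, t i ∈ (range m).image (fun j => t (2 * j)) ↔ i < 2 * m ∧ Even i := by
    intro i
    simp only [mem_image, mem_range, ht.injective.eq_iff, even_iff_two_dvd]
    constructor
    · rintro ⟨j, hj, rfl⟩
      exact ⟨by omega, dvd_mul_right 2 j⟩
    · rintro ⟨hi, j, rfl⟩
      exact ⟨j, by omega, rfl⟩
  rw [mixValue, mix, ← image_range_two_mul, sort_image_range_of_strictMono ht, List.map_map]
  convert blocks_map_range_even (2 * m) using 2
  refine List.map_congr_left fun i hi => ?_
  simp only [Function.comp_apply, label, List.mem_range.mp hi, true_and]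

lemma bitRev_lt (k i : ℕ) : bitRev k i < 2 ^ k := by
  induction k generalizing i with
  | zero => simp [bitRev]
  | succ k ih =>
    have := ih (i / 2)
    rcases Nat.mod_two_eq_zero_or_one i with h | h <;> simp only [bitRev, h, pow_succ] <;> omega

lemma bitRev_two_mul (k j : ℕ) : bitRev (k + 1) (2 * j) = bitRev k j := by
  simp [bitRev]

lemma bitRev_two_mul_add_one (k j : ℕ) : bitRev (k + 1) (2 * j + 1) = 2 ^ k + bitRev k j := by
  simp [bitRev, Nat.add_mod, Nat.add_div]

lemma natCast_mem_completeTree_leaves_iff (k off n : ℕ) :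
    (n : ℝ) ∈ (completeTree k off).leaves ↔ off ≤ n ∧ n < off + 2 ^ k := by
  induction k generalizing off with
  | zero => simp only [completeTree, BTree.leaves, List.mem_singleton, Nat.cast_inj]; omega
  | succ k ih => simp only [completeTree, BTree.leaves, List.mem_append, ih, pow_succ]; omega

noncomputable def bitRevPointsAt (k off : ℕ) (t : ℕ → ℝ) : Finset (ℝ × ℝ) :=
  (range (2 ^ k)).image fun j => (((off + bitRev k j : ℕ) : ℝ), t j)

lemma bitRevPointsAt_succ (k off : ℕ) (t : ℕ → ℝ) :
    bitRevPointsAt (k + 1) off t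
      = bitRevPointsAt k off (fun j => t (2 * j))
        ∪ bitRevPointsAt k (off + 2 ^ k) (fun j => t (2 * j + 1)) := by
  simp only [bitRevPointsAt, pow_succ', image_range_two_mul, bitRev_two_mul,
    bitRev_two_mul_add_one, add_assoc]

lemma exists_natCast_fst_of_mem_bitRevPointsAt {k off : ℕ} {t : ℕ → ℝ} {p : ℝ × ℝ}
    (hp : p ∈ bitRevPointsAt k off t) : ∃ n : ℕ, p.1 = n ∧ off ≤ n ∧ n < off + 2 ^ k := by
  obtain ⟨j, -, rfl⟩ := mem_image.mp hp
  exact ⟨_, rfl, by have := bitRev_lt k j; omega⟩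

lemma filter_bitRevPointsAt_succ_left (k off : ℕ) (t : ℕ → ℝ) :
    (bitRevPointsAt (k + 1) off t).filter (fun p => p.1 ∈ (completeTree k off).leaves)
      = bitRevPointsAt k off (fun j => t (2 * j)) := by
  rw [bitRevPointsAt_succ, filter_union, filter_true_of_mem, filter_false_of_mem, union_empty]
  all_goals
    intro p hp
    obtain ⟨n, hn, hlo, hhi⟩ := exists_natCast_fst_of_mem_bitRevPointsAt hp
    rw [hn, natCast_mem_completeTree_leaves_iff]
    omega

lemma filter_bitRevPointsAt_succ_right (k off : ℕ) (t : ℕ → ℝ) :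
    (bitRevPointsAt (k + 1) off t).filter (fun p => p.1 ∈ (completeTree k (off + 2 ^ k)).leaves)
      = bitRevPointsAt k (off + 2 ^ k) (fun j => t (2 * j + 1)) := by
  rw [bitRevPointsAt_succ, filter_union, filter_false_of_mem, filter_true_of_mem, empty_union]
  all_goals
    intro p hp
    obtain ⟨n, hn, hlo, hhi⟩ := exists_natCast_fst_of_mem_bitRevPointsAt hp
    rw [hn, natCast_mem_completeTree_leaves_iff]
    omega

lemma image_snd_bitRevPointsAt (k off : ℕ) (t : ℕ → ℝ) :
    (bitRevPointsAt k off t).image Prod.snd = (range (2 ^ k)).image t := by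
  rw [bitRevPointsAt, image_image]
  rfl

theorem alt_completeTree_bitRevPointsAt (k off : ℕ) {t : ℕ → ℝ} (ht : StrictMono t) :
    Alt (completeTree k off) (bitRevPointsAt k off t) = 2 ^ k * k := by
  induction k generalizing off t with
  | zero => simp [completeTree, Alt]
  | succ k ih =>
    rw [completeTree, Alt, filter_bitRevPointsAt_succ_left, filter_bitRevPointsAt_succ_right,
      image_snd_bitRevPointsAt, image_snd_bitRevPointsAt, mixValue_image_even_odd ht,
      ih off fun _ _ h => ht (by omega), ih (off + 2 ^ k) fun _ _ h => ht (by omega)]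
    ring

theorem alt_bitReversal (k : ℕ) :
    Alt (completeTree k 0) (bitRevPoints k) = 2 ^ k * k := by
  have hpoints : bitRevPoints k = bitRevPointsAt k 0 Nat.cast := by
    simp [bitRevPoints, bitRevPointsAt]
  rw [hpoints]
  exact alt_completeTree_bitRevPointsAt k 0 Nat.strictMono_cast
end
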